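/- Let q be a prime power, n ≥ 2, and l ≥ 1. In SL_n(𝔽_q[[X]]) (with the topology induced entrywise from the power series ring), the l-th congruence subgroup — the kernel of the reduction homomorphism SL_n(𝔽_q[[X]]) → SL_n(𝔽_q[[X]]/(X^l)) — equals the topological closure of the subgroup generated by the elementary matrices 1 + a·E_{ij} with i ≠ j and a ∈ X^l·𝔽_q[[X]], together with the diagonal matrices of determinant 1 that are congruent to the identity modulo X^l. (This is the proposition on congruence subgroups, in its type A_{n-1} instance.) -/

import Mathlib

/-!
STATEMENT 3: In `SL_n(𝔽_q[[X]])` the l-th congruence subgroup equals the topological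
closure of the subgroup generated by the elementary matrices `1 + a·E_{ij}` (i ≠ j,
a ∈ X^l·𝔽_q[[X]]) together with the diagonal matrices of determinant 1 congruent to
the identity modulo `X^l`.
-/

noncomputable section
open Matrix

variable (Fq : Type) [Field Fq] [Fintype Fq]

/-- `𝔽_q` is discrete. -/
instance : TopologicalSpace Fq := ⊥

/-- The coefficientwise (product) topology on `𝔽_q[[X]]`. -/
instance : TopologicalSpace (PowerSeries Fq) :=
  TopologicalSpace.induced (fun f k => PowerSeries.coeff k f) Pi.topologicalSpace

/-- The entrywise topology on `SL_n(𝔽_q[[X]])`. -/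
instance (n : ℕ) : TopologicalSpace (SpecialLinearGroup (Fin n) (PowerSeries Fq)) :=
  TopologicalSpace.induced
    ((↑) : SpecialLinearGroup (Fin n) (PowerSeries Fq) → Matrix (Fin n) (Fin n) (PowerSeries Fq))
    inferInstance

/-!
For `m ≥ l ≥ 1` write `g ≡ 1 mod X^m` as `1 + X^m A`. Modulo `X^(m+1)` the square of `X^m`
vanishes, so products of such matrices add their `A`'s, and `∏ g_ii ≡ det g = 1`. Hence `g`
agrees modulo `X^(m+1)` with the product of the transvections `1 + g_ij E_ij` (`i ≠ j`) and
of `diag(g_ii)` with one entry multiplied by the unit `(∏ g_ii)⁻¹ ≡ 1`, all of which are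
generators. Iterating, every element of the congruence subgroup is a limit of elements of the
generated subgroup; conversely the congruence subgroup is closed, being cut out by finitely many
coefficients of each entry.
-/

open Filter Topology PowerSeries

section FirstOrder

variable {S ι : Type*} [CommRing S] [Fintype ι] [DecidableEq ι] {x : S}

theorem one_add_smul_mul_one_add_smul (hx : x * x = 0) (P Q : Matrix ι ι S) :
    (1 + x • P) * (1 + x • Q) = 1 + x • (P + Q) := by
  rw [add_mul, one_mul, mul_add, mul_one, smul_mul_smul_comm, hx, zero_smul, add_zero, smul_add,
    add_assoc, add_comm (x • Q)]

theorem list_prod_one_add_smul (hx : x * x = 0) {α : Type*} (L : List α)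
    (f : α → Matrix ι ι S) :
    (L.map fun p => 1 + x • f p).prod = 1 + x • (L.map f).sum := by
  induction L with
  | nil => simp
  | cons p L ih => rw [List.map_cons, List.prod_cons, ih, one_add_smul_mul_one_add_smul hx,
      List.map_cons, List.sum_cons]

theorem det_one_add_smul_of_mul_self_eq_zero (hx : x * x = 0) (M : Matrix ι ι S) :
    det (1 + x • M) = 1 + x * trace M := by
  rw [det_one_add_smul, sq, hx, mul_zero, add_zero, mul_comm]

theorem prod_diag_one_add_smul_eq_det (hx : x * x = 0) (M : Matrix ι ι S) :
    ∏ i, (1 + x • M) i i = det (1 + x • M) := by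
  have hdiag : diagonal (fun i => (1 + x • M) i i) = 1 + x • diagonal fun i => M i i := by
    ext i j
    rcases eq_or_ne i j with rfl | hij <;> simp [*]
  rw [← det_diagonal, hdiag, det_one_add_smul_of_mul_self_eq_zero hx,
    det_one_add_smul_of_mul_self_eq_zero hx, trace_diagonal]
  rfl

end FirstOrder

theorem sum_single_offDiag_add_diagonal {ι R : Type*} [Fintype ι] [DecidableEq ι]
    [AddCommMonoid R] (M : Matrix ι ι R) :
    ∑ p : {p : ι × ι // p.1 ≠ p.2}, single p.1.1 p.1.2 (M p.1.1 p.1.2) +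
      diagonal (fun i => M i i) = M := by
  ext i j
  rw [Matrix.add_apply, Matrix.sum_apply]
  rcases eq_or_ne i j with rfl | hij
  · rw [Finset.sum_eq_zero fun (p : {p : ι × ι // p.1 ≠ p.2}) _ =>
      single_apply_of_ne _ _ _ _ _ fun h => p.2 (h.1.trans h.2.symm), diagonal_apply_eq, zero_add]
  · rw [Fintype.sum_eq_single (⟨(i, j), hij⟩ : {p : ι × ι // p.1 ≠ p.2}) fun p hp =>
      single_apply_of_ne _ _ _ _ _ fun h => hp (Subtype.ext (Prod.ext h.1 h.2)), single_apply_same,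
      diagonal_apply_ne _ hij, add_zero]

section Congruence

variable {A ι : Type*} [CommRing A] [Fintype ι] [DecidableEq ι]

def congruenceSubgroup (I : Ideal A) : Subgroup (SpecialLinearGroup ι A) :=
  (SpecialLinearGroup.map (Ideal.Quotient.mk I)).ker

def congruenceElementary (I : Ideal A) : Set (SpecialLinearGroup ι A) :=
  {g | ∃ i j : ι, i ≠ j ∧ ∃ a ∈ I, (g : Matrix ι ι A) = 1 + single i j a}

def congruenceDiagonal (I : Ideal A) : Set (SpecialLinearGroup ι A) :=
  {g | (∀ i j : ι, i ≠ j → (g : Matrix ι ι A) i j = 0) ∧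
    ∀ i j : ι, Ideal.Quotient.mk I ((g : Matrix ι ι A) i j) =
      Ideal.Quotient.mk I ((1 : Matrix ι ι A) i j)}

theorem mem_congruenceSubgroup_iff {I : Ideal A} {g : SpecialLinearGroup ι A} :
    g ∈ congruenceSubgroup I ↔
      ∀ i j, Ideal.Quotient.mk I (g i j) = Ideal.Quotient.mk I ((1 : Matrix ι ι A) i j) := by
  rw [congruenceSubgroup, MonoidHom.mem_ker, Matrix.SpecialLinearGroup.ext_iff]
  simp [Matrix.one_apply, apply_ite]

theorem map_mk_eq_map_mk_iff {I : Ideal A} {g h : SpecialLinearGroup ι A} :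
    SpecialLinearGroup.map (Ideal.Quotient.mk I) g =
        SpecialLinearGroup.map (Ideal.Quotient.mk I) h ↔ h⁻¹ * g ∈ congruenceSubgroup I :=
  MonoidHom.eq_iff _

theorem congruenceSubgroup_mono {I J : Ideal A} (hJI : J ≤ I) :
    congruenceSubgroup (ι := ι) J ≤ congruenceSubgroup I := fun _ hg =>
  mem_congruenceSubgroup_iff.mpr fun i j =>
    Ideal.Quotient.eq.mpr (hJI (Ideal.Quotient.eq.mp (mem_congruenceSubgroup_iff.mp hg i j)))

theorem closure_congruenceElementary_union_congruenceDiagonal_le (I : Ideal A) :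
    Subgroup.closure (congruenceElementary I ∪ congruenceDiagonal I) ≤
      congruenceSubgroup (ι := ι) I := by
  rw [Subgroup.closure_le]
  rintro g (⟨i, j, -, a, ha, hg⟩ | ⟨-, hg⟩)
  · refine mem_congruenceSubgroup_iff.mpr fun i' j' => ?_
    rw [hg, Matrix.add_apply, map_add, add_eq_left, Ideal.Quotient.eq_zero_iff_mem, single_apply]
    split_ifs
    exacts [ha, I.zero_mem]
  · exact mem_congruenceSubgroup_iff.mpr hg

theorem exists_map_eq_one_add_smul {a : A} {g : SpecialLinearGroup ι A}
    (hg : g ∈ congruenceSubgroup (Ideal.span {a})) {B : Type*} [CommRing B] (f : A →+* B) :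
    ∃ M : Matrix ι ι B, (g : Matrix ι ι A).map f = 1 + f a • M := by
  have hentry : ∀ i j, ∃ c, (g : Matrix ι ι A) i j = (1 : Matrix ι ι A) i j + a * c := by
    intro i j
    obtain ⟨c, hc⟩ := Ideal.mem_span_singleton'.mp
      (Ideal.Quotient.eq.mp (mem_congruenceSubgroup_iff.mp hg i j))
    exact ⟨c, by rw [mul_comm, hc, add_sub_cancel]⟩
  choose c hc using hentry
  refine ⟨(of c).map f, ?_⟩
  ext i j
  rw [map_apply, hc, map_add, map_mul]
  rcases eq_or_ne i j with rfl | hij <;> simp [*]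

def offDiagTransvections (M : Matrix ι ι A) : SpecialLinearGroup ι A :=
  ((Finset.univ : Finset {p : ι × ι // p.1 ≠ p.2}).toList.map fun p =>
    SpecialLinearGroup.transvection p.2 (M p.1.1 p.1.2)).prod

theorem coe_offDiagTransvections (M : Matrix ι ι A) :
    (offDiagTransvections M : Matrix ι ι A) =
      ((Finset.univ : Finset {p : ι × ι // p.1 ≠ p.2}).toList.map fun p =>
        1 + single p.1.1 p.1.2 (M p.1.1 p.1.2)).prod := by
  rw [offDiagTransvections, ← SpecialLinearGroup.coeMonoidHom_apply, map_list_prod, List.map_map]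
  rfl

theorem map_offDiagTransvections {B : Type*} [CommRing B] (f : A →+* B) (M : Matrix ι ι A) :
    SpecialLinearGroup.map f (offDiagTransvections M) = offDiagTransvections (M.map f) := by
  ext1
  simp [coe_offDiagTransvections, map_list_prod, List.map_map, Function.comp_def, Matrix.map_add,
    Matrix.map_one]

theorem offDiagTransvections_mem_closure {I : Ideal A} {M : Matrix ι ι A}
    (hM : ∀ i j, i ≠ j → M i j ∈ I) :
    offDiagTransvections M ∈ Subgroup.closure (congruenceElementary I ∪ congruenceDiagonal I) := by
  refine Subgroup.list_prod_mem _ fun t ht => ?_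
  obtain ⟨p, -, rfl⟩ := List.mem_map.mp ht
  exact Subgroup.subset_closure (Or.inl ⟨p.1.1, p.1.2, p.2, _, hM _ _ p.2, rfl⟩)

end Congruence

section Approximation

variable {A ι : Type*} [CommRing A] [Fintype ι] [DecidableEq ι] {a : A}
  {g : SpecialLinearGroup ι A}

theorem mk_prod_diag_eq_one {J : Ideal A} (haJ : a * a ∈ J)
    (hg : g ∈ congruenceSubgroup (Ideal.span {a})) :
    Ideal.Quotient.mk J (∏ i, g i i) = 1 := by
  obtain ⟨M, hM⟩ := exists_map_eq_one_add_smul hg (Ideal.Quotient.mk J)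
  have hx : Ideal.Quotient.mk J a * Ideal.Quotient.mk J a = 0 := by
    rwa [← map_mul, Ideal.Quotient.eq_zero_iff_mem]
  calc Ideal.Quotient.mk J (∏ i, g i i)
      = ∏ i, ((g : Matrix ι ι A).map (Ideal.Quotient.mk J)) i i := map_prod _ _ _
    _ = det ((g : Matrix ι ι A).map (Ideal.Quotient.mk J)) := by
      rw [hM, prod_diag_one_add_smul_eq_det hx]
    _ = 1 := by rw [← RingHom.mapMatrix_apply, ← RingHom.map_det, g.prop, map_one]

theorem exists_mem_congruenceDiagonal_map_eq {I J : Ideal A} (ha : a ∈ Ideal.jacobson ⊥)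
    (haI : a ∈ I) (haJ : a * a ∈ J) (hg : g ∈ congruenceSubgroup (Ideal.span {a})) :
    ∃ Δ ∈ (congruenceDiagonal I : Set (SpecialLinearGroup ι A)),
      (Δ : Matrix ι ι A).map (Ideal.Quotient.mk J) =
        diagonal fun i => Ideal.Quotient.mk J (g i i) := by
  rcases isEmpty_or_nonempty ι with hι | ⟨⟨i₀⟩⟩
  · exact ⟨1, ⟨fun i => isEmptyElim i, fun i => isEmptyElim i⟩, ext fun i => isEmptyElim i⟩
  have hgI : g ∈ congruenceSubgroup I :=
    congruenceSubgroup_mono (Ideal.span_singleton_le_iff_mem I |>.mpr haI) hg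
  have hprod_diag : ∀ {K : Ideal A}, g ∈ congruenceSubgroup K →
      Ideal.Quotient.mk K (∏ i, g i i) = 1 := fun hgK => by
    simpa [map_prod] using Finset.prod_congr rfl fun i _ => mem_congruenceSubgroup_iff.mp hgK i i
  have hu : IsUnit (∏ i, g i i) := Ideal.isUnit_of_sub_one_mem_jacobson_bot _ <|
    (Ideal.span_singleton_le_iff_mem _).mpr ha (Ideal.Quotient.eq.mp (hprod_diag hg))
  set d := Function.update (fun i => g i i) i₀ (g i₀ i₀ * ↑hu.unit⁻¹) with hd_def
  have hd : ∀ {K : Ideal A}, Ideal.Quotient.mk K (∏ i, g i i) = 1 →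
      ∀ i, Ideal.Quotient.mk K (d i) = Ideal.Quotient.mk K (g i i) := by
    intro K hK i
    have hc : Ideal.Quotient.mk K ↑hu.unit⁻¹ = 1 := by
      have := congrArg (Ideal.Quotient.mk K) hu.mul_val_inv
      rwa [map_mul, hK, one_mul, map_one] at this
    rcases eq_or_ne i i₀ with rfl | hi
    · rw [hd_def, Function.update_self, map_mul, hc, mul_one]
    · rw [hd_def, Function.update_of_ne hi]
  have hdet : det (diagonal d) = 1 := by
    rw [det_diagonal, Finset.prod_update_of_mem (Finset.mem_univ i₀),
      Finset.sdiff_singleton_eq_erase, mul_right_comm,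
      Finset.mul_prod_erase _ (fun i => g i i) (Finset.mem_univ _), hu.mul_val_inv]
  refine ⟨⟨diagonal d, hdet⟩, ⟨fun i j hij => diagonal_apply_ne _ hij, fun i j => ?_⟩,
    (diagonal_map (map_zero _)).trans <|
      congrArg diagonal (funext (hd (mk_prod_diag_eq_one haJ hg)))⟩
  rcases eq_or_ne i j with rfl | hij
  · simpa [hd (hprod_diag hgI) i] using mem_congruenceSubgroup_iff.mp hgI i i
  · simp [hij]

theorem exists_mem_closure_map_mk_eq_of_mul_self_mem {I J : Ideal A}
    (ha : a ∈ Ideal.jacobson ⊥) (haI : a ∈ I) (haJ : a * a ∈ J)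
    (hg : g ∈ congruenceSubgroup (Ideal.span {a})) :
    ∃ h ∈ Subgroup.closure (congruenceElementary I ∪ congruenceDiagonal I),
      SpecialLinearGroup.map (Ideal.Quotient.mk J) h =
        SpecialLinearGroup.map (Ideal.Quotient.mk J) g := by
  have hgI : g ∈ congruenceSubgroup I :=
    congruenceSubgroup_mono (Ideal.span_singleton_le_iff_mem I |>.mpr haI) hg
  have hoff : ∀ i j, i ≠ j → g i j ∈ I := fun i j hij => by
    simpa [hij, Ideal.Quotient.eq_zero_iff_mem] using mem_congruenceSubgroup_iff.mp hgI i j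
  obtain ⟨Δ, hΔ, hΔJ⟩ := exists_mem_congruenceDiagonal_map_eq ha haI haJ hg
  refine ⟨offDiagTransvections g * Δ, mul_mem (offDiagTransvections_mem_closure hoff)
    (Subgroup.subset_closure (Or.inr hΔ)), ?_⟩
  obtain ⟨M, hM⟩ := exists_map_eq_one_add_smul hg (Ideal.Quotient.mk J)
  set x := Ideal.Quotient.mk J a
  have hx : x * x = 0 := by rwa [← map_mul, Ideal.Quotient.eq_zero_iff_mem]
  have hoffJ : ∀ p ∈ (Finset.univ : Finset {p : ι × ι // p.1 ≠ p.2}).toList,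
      1 + single p.1.1 p.1.2 ((1 + x • M) p.1.1 p.1.2) =
        1 + x • single p.1.1 p.1.2 (M p.1.1 p.1.2) := by
    rintro ⟨⟨i, j⟩, hij⟩ -
    simp [hij, smul_single]
  have hdiagJ :
      (diagonal fun i => Ideal.Quotient.mk J (g i i)) = 1 + x • diagonal fun i => M i i := by
    ext i j
    have hii : Ideal.Quotient.mk J (g i i) = (1 + x • M) i i := by rw [← hM]; rfl
    rcases eq_or_ne i j with rfl | hij <;> simp [*]
  apply SpecialLinearGroup.coeMonoidHom_injective
  simp only [map_mul, SpecialLinearGroup.coeMonoidHom_apply, map_offDiagTransvections,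
    SpecialLinearGroup.map_apply_coe, RingHom.mapMatrix_apply]
  rw [hM, coe_offDiagTransvections, hΔJ, List.map_congr_left hoffJ, list_prod_one_add_smul hx,
    hdiagJ, one_add_smul_mul_one_add_smul hx, Finset.sum_map_toList,
    sum_single_offDiag_add_diagonal]

end Approximation

section PowerSeries

variable {R ι : Type*} [CommRing R] [Fintype ι] [DecidableEq ι]

theorem PowerSeries.X_pow_mem_jacobson_bot {m : ℕ} (hm : m ≠ 0) :
    (X : R⟦X⟧) ^ m ∈ Ideal.jacobson ⊥ :=
  Ideal.mem_jacobson_bot.mpr fun y => isUnit_iff_constantCoeff.mpr (by simp [hm])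

theorem PowerSeries.mk_span_X_pow_eq_mk_iff {m : ℕ} {f f' : R⟦X⟧} :
    Ideal.Quotient.mk (Ideal.span {X ^ m}) f = Ideal.Quotient.mk (Ideal.span {X ^ m}) f' ↔
      ∀ k < m, coeff k f = coeff k f' := by
  simp [Ideal.Quotient.eq, Ideal.mem_span_singleton, X_pow_dvd_iff, sub_eq_zero]

theorem map_mk_span_X_pow_eq_iff {m : ℕ} {g g' : SpecialLinearGroup ι R⟦X⟧} :
    SpecialLinearGroup.map (Ideal.Quotient.mk (Ideal.span {X ^ m})) g =
        SpecialLinearGroup.map (Ideal.Quotient.mk (Ideal.span {X ^ m})) g' ↔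
      ∀ i j, ∀ k < m, coeff k (g i j) = coeff k (g' i j) := by
  simp [Matrix.SpecialLinearGroup.ext_iff, mk_span_X_pow_eq_mk_iff]

theorem PowerSeries.exists_mem_closure_map_mk_span_X_pow_eq {l : ℕ} (hl : l ≠ 0)
    {g : SpecialLinearGroup ι R⟦X⟧} (hg : g ∈ congruenceSubgroup (Ideal.span {X ^ l}))
    (m : ℕ) :
    ∃ h ∈ Subgroup.closure
        (congruenceElementary (Ideal.span {X ^ l}) ∪ congruenceDiagonal (Ideal.span {X ^ l})),
      SpecialLinearGroup.map (Ideal.Quotient.mk (Ideal.span {X ^ m})) h =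
        SpecialLinearGroup.map (Ideal.Quotient.mk (Ideal.span {X ^ m})) g := by
  have happrox : ∀ d, ∃ h ∈ Subgroup.closure
      (congruenceElementary (Ideal.span {X ^ l}) ∪ congruenceDiagonal (Ideal.span {X ^ l})),
      SpecialLinearGroup.map (Ideal.Quotient.mk (Ideal.span {X ^ (l + d)})) h =
        SpecialLinearGroup.map (Ideal.Quotient.mk (Ideal.span {X ^ (l + d)})) g := by
    intro d
    induction d with
    | zero => exact ⟨1, one_mem _, map_mk_eq_map_mk_iff.mpr (by simpa using inv_mem hg)⟩
    | succ d ih =>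
      obtain ⟨h, hh, hhg⟩ := ih
      have ha : (X : R⟦X⟧) ^ (l + d) ∈ Ideal.jacobson ⊥ := X_pow_mem_jacobson_bot (by omega)
      have haI : (X : R⟦X⟧) ^ (l + d) ∈ Ideal.span {X ^ l} :=
        Ideal.mem_span_singleton.mpr (pow_dvd_pow X (Nat.le_add_right l d))
      have haJ : (X : R⟦X⟧) ^ (l + d) * X ^ (l + d) ∈ Ideal.span {X ^ (l + (d + 1))} :=
        Ideal.mem_span_singleton.mpr (by rw [← pow_add]; exact pow_dvd_pow X (by omega))
      obtain ⟨h', hh', hh'g⟩ :=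
        exists_mem_closure_map_mk_eq_of_mul_self_mem ha haI haJ (map_mk_eq_map_mk_iff.mp hhg.symm)
      refine ⟨h * h', mul_mem hh hh', ?_⟩
      rw [map_mul, hh'g, map_mul, map_inv, mul_inv_cancel_left]
  obtain ⟨h, hh, hhg⟩ := happrox m
  have hle : Ideal.span {(X : R⟦X⟧) ^ (l + m)} ≤ Ideal.span {X ^ m} :=
    Ideal.span_singleton_le_span_singleton.mpr (pow_dvd_pow X (Nat.le_add_left m l))
  exact ⟨h, hh,
    map_mk_eq_map_mk_iff.mpr (congruenceSubgroup_mono hle (map_mk_eq_map_mk_iff.mp hhg))⟩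

end PowerSeries

section Topology

variable {K : Type} [Field K] {n : ℕ}

theorem continuous_coeff_apply (i j : Fin n) (k : ℕ) :
    Continuous fun g : SpecialLinearGroup (Fin n) K⟦X⟧ => coeff k (g i j) := by
  have hcoe : Continuous fun g : SpecialLinearGroup (Fin n) K⟦X⟧ =>
      (g : Matrix (Fin n) (Fin n) K⟦X⟧) :=
    continuous_induced_dom
  have hcoeff : Continuous fun f : K⟦X⟧ => fun k => coeff k f := continuous_induced_dom
  exact (continuous_apply k).comp (hcoeff.comp (hcoe.matrix_elem i j))

theorem isClosed_congruenceSubgroup (l : ℕ) :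
    IsClosed (congruenceSubgroup (ι := Fin n) (Ideal.span {(X : K⟦X⟧) ^ l}) :
      Set (SpecialLinearGroup (Fin n) K⟦X⟧)) := by
  have : DiscreteTopology K := ⟨rfl⟩
  have hset : (congruenceSubgroup (ι := Fin n) (Ideal.span {(X : K⟦X⟧) ^ l}) :
      Set (SpecialLinearGroup (Fin n) K⟦X⟧)) =
      ⋂ (i) (j) (k ∈ Set.Iio l),
        {g | coeff k (g i j) = coeff k ((1 : Matrix (Fin n) (Fin n) K⟦X⟧) i j)} := by
    ext g
    simp [mem_congruenceSubgroup_iff, mk_span_X_pow_eq_mk_iff]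
  rw [hset]
  exact isClosed_iInter fun i => isClosed_iInter fun j => isClosed_biInter fun k _ =>
    isClosed_eq (continuous_coeff_apply i j k) continuous_const

theorem tendsto_of_forall_map_mk_span_X_pow_eq {u : ℕ → SpecialLinearGroup (Fin n) K⟦X⟧}
    {g : SpecialLinearGroup (Fin n) K⟦X⟧}
    (hu : ∀ m, SpecialLinearGroup.map (Ideal.Quotient.mk (Ideal.span {X ^ m})) (u m) =
      SpecialLinearGroup.map (Ideal.Quotient.mk (Ideal.span {X ^ m})) g) :
    Tendsto u atTop (𝓝 g) := by
  have : DiscreteTopology K := ⟨rfl⟩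
  rw [(Topology.IsInducing.induced _).tendsto_nhds_iff]
  refine tendsto_pi_nhds.mpr fun i => tendsto_pi_nhds.mpr fun j => ?_
  rw [(Topology.IsInducing.induced _).tendsto_nhds_iff]
  refine tendsto_pi_nhds.mpr fun k => ?_
  rw [nhds_discrete, tendsto_pure]
  filter_upwards [eventually_gt_atTop k] with m hkm
  exact map_mk_span_X_pow_eq_iff.mp (hu m) i j k hkm

end Topology

theorem congruenceSubgroup_eq_closure
    (n l : ℕ) (hl : 1 ≤ l) :
    ((MonoidHom.ker (SpecialLinearGroup.map (n := Fin n)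
        (Ideal.Quotient.mk (Ideal.span {(PowerSeries.X : PowerSeries Fq) ^ l})))) :
      Set (SpecialLinearGroup (Fin n) (PowerSeries Fq))) =
      closure ((Subgroup.closure
        ({g : SpecialLinearGroup (Fin n) (PowerSeries Fq) |
            ∃ i j : Fin n, i ≠ j ∧ ∃ a ∈ Ideal.span {(PowerSeries.X : PowerSeries Fq) ^ l},
              (g : Matrix (Fin n) (Fin n) (PowerSeries Fq)) = 1 + Matrix.single i j a} ∪
         {g : SpecialLinearGroup (Fin n) (PowerSeries Fq) |
            (∀ i j : Fin n, i ≠ j → (g : Matrix (Fin n) (Fin n) (PowerSeries Fq)) i j = 0) ∧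
            ∀ i j : Fin n,
              Ideal.Quotient.mk (Ideal.span {(PowerSeries.X : PowerSeries Fq) ^ l})
                  ((g : Matrix (Fin n) (Fin n) (PowerSeries Fq)) i j) =
                Ideal.Quotient.mk (Ideal.span {(PowerSeries.X : PowerSeries Fq) ^ l})
                  ((1 : Matrix (Fin n) (Fin n) (PowerSeries Fq)) i j)})) :
        Set (SpecialLinearGroup (Fin n) (PowerSeries Fq))) := by
  refine Set.Subset.antisymm (fun g hg => ?_) (closure_minimal
    (closure_congruenceElementary_union_congruenceDiagonal_le _) (isClosed_congruenceSubgroup l))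
  choose u hu hug using PowerSeries.exists_mem_closure_map_mk_span_X_pow_eq (by omega) hg
  exact mem_closure_of_tendsto (tendsto_of_forall_map_mk_span_X_pow_eq hug)
    (Eventually.of_forall hu)
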